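/- arXiv:2408.01673 — 2 statements merged into one kernel-verified Lean document; each statement's English description precedes it below -/
import Mathlib

section
/- Fix agent a with true preference r_a and an outside option demotion strategy d_a. Suppose there exists a deterministic rank-minimizing assignment y* for (r_a, p_{-a}) with y*_{ao} = 1 for some truly acceptable o (R(o,r_a) < R(∅,r_a)). Then |Y*(d_a, p_{-a})| ≤ |Y*(r_a, p_{-a})|, where Y*(p) denotes the set of deterministic rank-minimizing assignments for p. -/
open Finset
open scoped Classical

variable {A O : Type*}

/-- A strict preference ranking: a bijection from object types to positions. -/
abbrev Pref (O : Type*) [Fintype O] := O ≃ Fin (Fintype.card O)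

/-- The rank of object `o` under ranking `p` (1 = best). -/
def rk [Fintype O] (p : Pref O) (o : O) : ℕ := (p o : ℕ) + 1

/-- A (probabilistic) assignment. -/
def IsAssignment [Fintype A] [Fintype O] (q : O → ℕ) (x : A → O → ℝ) : Prop :=
  (∀ a o, 0 ≤ x a o ∧ x a o ≤ 1) ∧ (∀ a, ∑ o, x a o = 1) ∧ (∀ o, ∑ a, x a o ≤ (q o : ℝ))

def IsDeterministic [Fintype A] [Fintype O] (x : A → O → ℝ) : Prop :=
  ∀ a o, x a o = 0 ∨ x a o = 1

/-- The rank value (sum of expected ranks). -/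
def RV [Fintype A] [Fintype O] (p : A → Pref O) (x : A → O → ℝ) : ℝ :=
  ∑ a, ∑ o, (rk (p a) o : ℝ) * x a o

/-- `x` is a rank-minimizing assignment for profile `p`. -/
def RankMin [Fintype A] [Fintype O] (q : O → ℕ) (p : A → Pref O) (x : A → O → ℝ) : Prop :=
  IsAssignment q x ∧ ∀ y, IsAssignment q y → RV p x ≤ RV p y

/-- `x` is wasteful for profile `p`. -/
def Wasteful [Fintype A] [Fintype O] (q : O → ℕ) (p : A → Pref O) (x : A → O → ℝ) : Prop :=
  ∃ o o' a, (∑ a', x a' o) < (q o : ℝ) ∧ 0 < x a o' ∧ rk (p a) o < rk (p a) o'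

/-- `k̄(p_a)`: the minimal `k` such that the types ranked at or above `k` have
total capacity at least `|A|`. -/
noncomputable def kbar [Fintype O] (nA : ℕ) (q : O → ℕ) (p : Pref O) : ℕ :=
  sInf {k | nA ≤ ∑ o ∈ Finset.univ.filter (fun o => rk p o ≤ k), q o}

/-- A deterministic assignment, viewed as a map from agents to objects, is feasible. -/
def DetOK [Fintype A] [Fintype O] (q : O → ℕ) (d : A → O) : Prop :=
  ∀ o, (Finset.univ.filter (fun a => d a = o)).card ≤ q o

/-- The 0-1 matrix of a deterministic assignment. -/
noncomputable def detMat [Fintype A] [Fintype O] (d : A → O) : A → O → ℝ :=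
  fun a o => if d a = o then 1 else 0

/-- The set of deterministic rank-minimizing assignments for `p`
(minimizing over all probabilistic assignments). -/
noncomputable def Ystar [Fintype A] [Fintype O] (q : O → ℕ) (p : A → Pref O) :
    Finset (A → O) :=
  Finset.univ.filter
    (fun d => DetOK q d ∧ ∀ x, IsAssignment q x → RV p (detMat d) ≤ RV p x)

/-- The uniform rank-minimizing mechanism. -/
noncomputable def fU [Fintype A] [Fintype O] (q : O → ℕ) (p : A → Pref O) : A → O → ℝ :=
  fun a o => (∑ d ∈ Ystar q p, detMat d a o) / (Ystar q p).card

/-- Agent `a` (with true ranking `r`) weakly prefers `x` to `x'`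
(first-order stochastic dominance). -/
def WeakPrefAt [Fintype A] [Fintype O] (r : Pref O) (a : A) (x x' : A → O → ℝ) : Prop :=
  ∀ j : ℕ, ∑ o ∈ Finset.univ.filter (fun o => rk r o ≤ j), x' a o ≤
           ∑ o ∈ Finset.univ.filter (fun o => rk r o ≤ j), x a o

/-- Agent `a` strictly prefers `x` to `x'`. -/
def StrictPrefAt [Fintype A] [Fintype O] (r : Pref O) (a : A) (x x' : A → O → ℝ) : Prop :=
  WeakPrefAt r a x x' ∧ ∃ j : ℕ, j < Fintype.card O ∧
    ∑ o ∈ Finset.univ.filter (fun o => rk r o ≤ j), x' a o <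
    ∑ o ∈ Finset.univ.filter (fun o => rk r o ≤ j), x a o

/-- `d` is an outside option demotion strategy for true ranking `r`. -/
def ODS [Fintype O] (null : O) (r d : Pref O) : Prop :=
  (∀ o, rk r o < rk r null → rk d o = rk r o) ∧ rk d null = Fintype.card O

/-- The refusal map `g`: each agent keeps probability on truly acceptable types
and moves all remaining mass to the null type. -/
noncomputable def refuse [Fintype A] [Fintype O] (null : O) (r : A → Pref O)
    (x : A → O → ℝ) : A → O → ℝ :=
  fun a o =>
    if rk (r a) o < rk (r a) null then x a o
    else if o = null then
      ∑ o' ∈ Finset.univ.filter (fun o' => rk (r a) null ≤ rk (r a) o'), x a o'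
    else 0

/-- Equal treatment of equals for a mechanism. -/
def SatisfiesETE [Fintype A] [Fintype O] (q : O → ℕ)
    (f : (A → Pref O) → A → O → ℝ) : Prop :=
  ∀ (p : A → Pref O) (a a' : A),
    (∀ o, rk (p a) o ≤ kbar (Fintype.card A) q (p a) → p a' o = p a o) →
    ∀ o, f p a o = f p a' o

/-! Send each `z ∈ Y*(d_a, p₋ₐ)` to the assignment that agrees with `z` except that agent `a`,
if `z` gives her a truly unacceptable type, gets `∅` instead (feasible since `q_∅ ≥ |A|`).
As `d_a` ranks every truly unacceptable type no higher than `r_a` ranks `∅`, the image has true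
rank value at most the `d_a`-rank value of `z`, which is at most `RV(y*)`: the two profiles agree
on `y*`. So the image lies in `Y*(r_a, p₋ₐ)`, and comparing the two optima shows that the rank of
`a`'s object is preserved, which makes the map injective. -/

lemma rk_injective [Fintype O] (p : Pref O) : Function.Injective (rk p) :=
  fun _ _ h => p.injective (Fin.ext (Nat.succ_injective h))

lemma ODS.rk_le_of_not_lt [Fintype O] {null : O} {r d : Pref O} (h : ODS null r d) {o : O}
    (ho : ¬ rk r o < rk r null) : rk r null ≤ rk d o := by
  by_contra! hlt
  set o' := r.symm (d o)
  have hro' : rk r o' = rk d o := by simp [o', rk]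
  have hdo' : rk d o' = rk d o := (h.1 o' (hro' ▸ hlt)).trans hro'
  exact ho (rk_injective d hdo' ▸ hro' ▸ hlt)

def truncate [Fintype O] (r : Pref O) (null : O) (o : O) : O :=
  if rk r o < rk r null then o else null

lemma ODS.rk_truncate_le [Fintype O] {null : O} {r d : Pref O} (h : ODS null r d) (o : O) :
    rk r (truncate r null o) ≤ rk d o := by
  unfold truncate
  split_ifs with ho
  · exact (h.1 o ho).ge
  · exact h.rk_le_of_not_lt ho

lemma eq_of_update_eq_of_rk_eq [Fintype O] [DecidableEq A] {a : A} {π π' : Pref O}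
    {z₁ z₂ : A → O} {o₁ o₂ : O}
    (h : Function.update z₁ a o₁ = Function.update z₂ a o₂)
    (h₁ : rk π o₁ = rk π' (z₁ a)) (h₂ : rk π o₂ = rk π' (z₂ a)) : z₁ = z₂ := by
  have ho : o₁ = o₂ := by simpa using congrFun h a
  funext a'
  rcases eq_or_ne a' a with rfl | hne
  · exact rk_injective π' (h₁.symm.trans (ho ▸ h₂))
  · simpa [Function.update_of_ne hne] using congrFun h a'

section Assignments

variable [Fintype A] [Fintype O]

lemma rv_detMat (p : A → Pref O) (z : A → O) :
    RV p (detMat z) = ∑ a, (rk (p a) (z a) : ℝ) := by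
  unfold RV detMat
  refine Finset.sum_congr rfl fun a _ => ?_
  simp

lemma detMat_isAssignment {q : O → ℕ} {z : A → O} (hz : DetOK q z) :
    IsAssignment q (detMat z) := by
  refine ⟨fun a o => ?_, fun a => by simp [detMat], fun o => ?_⟩
  · unfold detMat; split_ifs <;> norm_num
  · simpa [detMat, Finset.sum_boole] using (Nat.cast_le (α := ℝ)).2 (hz o)

lemma mem_Ystar {q : O → ℕ} {p : A → Pref O} {z : A → O} :
    z ∈ Ystar q p ↔ DetOK q z ∧ ∀ x, IsAssignment q x → RV p (detMat z) ≤ RV p x := by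
  simp [Ystar]

lemma rv_le_of_mem_Ystar {q : O → ℕ} {p : A → Pref O} {z w : A → O} (hz : z ∈ Ystar q p)
    (hw : DetOK q w) : RV p (detMat z) ≤ RV p (detMat w) :=
  (mem_Ystar.1 hz).2 _ (detMat_isAssignment hw)

lemma mem_Ystar_of_rv_le {q : O → ℕ} {p : A → Pref O} {z w : A → O} (hz : z ∈ Ystar q p)
    (hw : DetOK q w) (hle : RV p (detMat w) ≤ RV p (detMat z)) : w ∈ Ystar q p :=
  mem_Ystar.2 ⟨hw, fun x hx => hle.trans ((mem_Ystar.1 hz).2 x hx)⟩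

variable [DecidableEq A]

lemma DetOK.update_null {q : O → ℕ} {null : O} (hnull : Fintype.card A ≤ q null)
    {z : A → O} (hz : DetOK q z) (a : A) : DetOK q (Function.update z a null) := by
  intro o
  by_cases ho : o = null
  · subst ho
    exact (Finset.card_filter_le _ _).trans hnull
  · refine (Finset.card_le_card fun a' => ?_).trans (hz o)
    simp only [Finset.mem_filter, Finset.mem_univ, true_and]
    rcases eq_or_ne a' a with rfl | hne
    · simp [Ne.symm ho]
    · simp [hne]

lemma DetOK.update_truncate {q : O → ℕ} {null : O} (hnull : Fintype.card A ≤ q null)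
    {z : A → O} (hz : DetOK q z) (a : A) (r : Pref O) :
    DetOK q (Function.update z a (truncate r null (z a))) := by
  unfold truncate
  split_ifs
  · rwa [Function.update_eq_self]
  · exact hz.update_null hnull a

lemma rv_update_sub_rv_update (p : A → Pref O) (a : A) (π π' : Pref O) (z : A → O) (o : O) :
    RV (Function.update p a π) (detMat (Function.update z a o)) -
      RV (Function.update p a π') (detMat z) = (rk π o : ℝ) - rk π' (z a) := by
  simp only [rv_detMat, ← Finset.add_sum_erase _ _ (Finset.mem_univ a), Function.update_self]
  have hrest : ∑ a' ∈ Finset.univ.erase a,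
      (rk (Function.update p a π a') (Function.update z a o a') : ℝ) =
      ∑ a' ∈ Finset.univ.erase a, (rk (Function.update p a π' a') (z a') : ℝ) :=
    Finset.sum_congr rfl fun a' ha' => by
      simp [Function.update_of_ne (Finset.ne_of_mem_erase ha')]
  rw [hrest]
  ring

lemma ODS.rv_update_eq {null : O} {r d : Pref O} (h : ODS null r d) (p : A → Pref O) (a : A)
    {y : A → O} (hy : rk r (y a) < rk r null) :
    RV (Function.update p a r) (detMat y) = RV (Function.update p a d) (detMat y) := by
  have := rv_update_sub_rv_update p a r d y (y a)
  rwa [Function.update_eq_self, h.1 _ hy, sub_self, sub_eq_zero] at this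

end Assignments

/-- Claim 2: if some deterministic rank-minimizing assignment for the
truthful profile gives `a` a truly acceptable type, then the ODS profile has no more
deterministic rank-minimizing assignments than the truthful one. -/
theorem stmt11 [Fintype A] [Fintype O] [DecidableEq A]
    (q : O → ℕ) (null : O) (hnull : Fintype.card A ≤ q null)
    (a : A) (ra da : Pref O) (hods : ODS null ra da)
    (p : A → Pref O)
    (hex : ∃ d ∈ Ystar q (Function.update p a ra), rk ra (d a) < rk ra null) :
    (Ystar q (Function.update p a da)).card ≤
      (Ystar q (Function.update p a ra)).card := by
  obtain ⟨y, hy, hya⟩ := hex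
  have hy_eq := hods.rv_update_eq p a hya
  set φ : (A → O) → A → O := fun z => Function.update z a (truncate ra null (z a))
  have hφ : ∀ z ∈ Ystar q (Function.update p a da),
      φ z ∈ Ystar q (Function.update p a ra) ∧ rk ra (truncate ra null (z a)) = rk da (z a) := by
    intro z hz
    have hφ_ok := (mem_Ystar.1 hz).1.update_truncate hnull a ra
    have hz_le := rv_le_of_mem_Ystar hz (mem_Ystar.1 hy).1
    have hy_le := rv_le_of_mem_Ystar hy hφ_ok
    have hgap := rv_update_sub_rv_update p a ra da z (truncate ra null (z a))
    have hrk : (rk ra (truncate ra null (z a)) : ℝ) ≤ rk da (z a) := by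
      exact_mod_cast hods.rk_truncate_le (z a)
    -- `RV_r(φ z) ≤ RV_d(z) ≤ RV_d(y) = RV_r(y) ≤ RV_r(φ z)`, so all of these are equal.
    refine ⟨mem_Ystar_of_rv_le hy hφ_ok (by linarith), ?_⟩
    exact_mod_cast (by linarith : (rk ra (truncate ra null (z a)) : ℝ) = rk da (z a))
  exact Finset.card_le_card_of_injOn φ (fun z hz => (hφ z hz).1) fun z₁ hz₁ z₂ hz₂ h =>
    eq_of_update_eq_of_rk_eq h (hφ z₁ hz₁).2 (hφ z₂ hz₂).2
end

section
/- In the 3-agent example A = {a1,a2,a3}, O = {o1,o2,∅} with q_{o1} = q_{o2} = 1, with a1's true preference r = (o1,∅,o2) and a2, a3 revealing β = (o1,o2,∅): if a1 reveals d = β (the ODS) and then refuses unacceptable assignments, the resulting post-refusal assignment g(f^U(d,β,β), r) — which gives a1 probabilities (1/3, 0, 2/3) on (o1,o2,∅) and a2, a3 probabilities (1/3,1/3,1/3) each — is wasteful: Σ_a g(...)_{a,o2} = 2/3 < 1 = q_{o2} while g(...)_{a2,∅} = 1/3 > 0 and a2 ranks o2 above ∅. -/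
open Finset
open scoped Classical

variable {A O : Type*}

/-- Coercion `Fin 3 ≃ Fin (Fintype.card (Fin 3))`. -/
def c3 : Fin 3 ≃ Fin (Fintype.card (Fin 3)) := finCongr (Fintype.card_fin 3).symm

/-- `β = (o1, o2, ∅)`. -/
def βp : Pref (Fin 3) := c3

/-- `r = (o1, ∅, o2)` (here `o1 = 0`, `o2 = 1`, `∅ = 2`). -/
def rp : Pref (Fin 3) := (Equiv.swap 1 2).trans c3

/-! With all three agents reporting β = (o1, o2, ∅) and a single copy of o1 and of o2, every
assignment has rank value at least 1 + 2 + 3 = 6, and the deterministic assignments attaining it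
are exactly the six bijections, so `f^U` gives every agent 1/3 of each type. Refusal leaves a2 and
a3 untouched, since they rank ∅ last, and moves a1's third of o2 to ∅. Hence only 2/3 of o2 is
used while a2 still holds 1/3 of ∅. -/

theorem sum_mul_detMat [Fintype A] [Fintype O] (c : O → ℝ) (d : A → O) (a : A) :
    ∑ o, c o * detMat d a o = c (d a) := by
  simp [detMat]

theorem RV_detMat [Fintype A] [Fintype O] (p : A → Pref O) (d : A → O) :
    RV p (detMat d) = ∑ a, (rk (p a) (d a) : ℝ) := by
  simp only [RV, sum_mul_detMat]

theorem RV_const [Fintype A] [Fintype O] (p : Pref O) (x : A → O → ℝ) :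
    RV (fun _ => p) x = ∑ o, (rk p o : ℝ) * ∑ a, x a o := by
  simp only [RV, Finset.mul_sum]
  exact Finset.sum_comm

theorem RV_const_detMat_of_bijective [Fintype O] (p : Pref O) {d : O → O}
    (hd : d.Bijective) : RV (fun _ => p) (detMat d) = ∑ o, (rk p o : ℝ) := by
  rw [RV_detMat, hd.sum_comp fun o => (rk p o : ℝ)]

theorem isAssignment_detMat [Fintype A] [Fintype O] {q : O → ℕ} {d : A → O}
    (hd : DetOK q d) : IsAssignment q (detMat d) := by
  refine ⟨fun a o => ?_, fun a => ?_, fun o => ?_⟩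
  · unfold detMat; split_ifs <;> norm_num
  · simpa using sum_mul_detMat (fun _ => 1) d a
  · simpa [detMat, Finset.sum_boole] using hd o

theorem detOK_of_injective [Fintype A] [Fintype O] {q : O → ℕ} (hq : ∀ o, 1 ≤ q o)
    {d : A → O} (hd : Function.Injective d) : DetOK q d := fun o =>
  (Finset.card_le_one.2 fun _ ha _ hb => hd <| by
    rw [(Finset.mem_filter.1 ha).2, (Finset.mem_filter.1 hb).2]).trans (hq o)

-- An explicit `DecidableEq O` rather than the classical instance, so that at `Fin 3` the filter
-- can be evaluated by `decide`.
theorem fU_apply [Fintype A] [Fintype O] [DecidableEq O] (q : O → ℕ) (p : A → Pref O)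
    (a : A) (o : O) :
    fU q p a o = #{d ∈ Ystar q p | d a = o} / #(Ystar q p) := by
  rw [fU, ← Finset.sum_boole]
  unfold detMat
  congr! 3

theorem eq_of_rk_le_rk_of_rk_eq_card [Fintype O] {p : Pref O} {o o' : O}
    (h : rk p o = Fintype.card O) (hle : rk p o ≤ rk p o') : o' = o := by
  have : rk p o' ≤ Fintype.card O := (p o').isLt
  exact p.injective (Fin.ext (by unfold rk at *; omega))

theorem refuse_eq_of_rk_null_eq_card [Fintype A] [Fintype O] (null : O) (r : A → Pref O)
    (x : A → O → ℝ) (a : A) (h : rk (r a) null = Fintype.card O) :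
    refuse null r x a = x a := by
  have last : ∀ o, rk (r a) null ≤ rk (r a) o → o = null := fun o ho =>
    eq_of_rk_le_rk_of_rk_eq_card h ho
  funext o
  unfold refuse
  split_ifs with hlt hnull
  · rfl
  · subst hnull
    rw [Finset.sum_eq_single_of_mem o (by simp) fun o' ho' hne =>
      absurd (last o' (Finset.mem_filter.1 ho').2) hne]
  · exact absurd (last o (not_lt.1 hlt)) hnull

theorem rk_βp (o : Fin 3) : rk βp o = o + 1 := rfl

theorem six_le_RV_βp {q : Fin 3 → ℕ} (h0 : q 0 = 1) (h1 : q 1 = 1)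
    {x : Fin 3 → Fin 3 → ℝ} (hx : IsAssignment q x) : 6 ≤ RV (fun _ => βp) x := by
  obtain ⟨-, hrow, hcol⟩ := hx
  have htotal : ∑ o, ∑ a, x a o = 3 := by
    rw [Finset.sum_comm]; simp [hrow]
  have hcol0 := hcol 0
  have hcol1 := hcol 1
  rw [h0] at hcol0
  rw [h1] at hcol1
  -- RV x = 3 · (total mass 3) - 2 · (mass on o1) - (mass on o2), and both masses are at most 1.
  rw [RV_const]
  simp only [Fin.sum_univ_three, rk_βp, Fin.val_zero, Fin.val_one, Fin.val_two]
    at htotal hcol0 hcol1 ⊢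
  push_cast at hcol0 hcol1 ⊢
  linarith

theorem RV_βp_detMat_of_injective {d : Fin 3 → Fin 3} (hd : d.Injective) :
    RV (fun _ => βp) (detMat d) = 6 := by
  rw [RV_const_detMat_of_bijective βp (Finite.injective_iff_bijective.1 hd)]
  simp only [Fin.sum_univ_three, rk_βp]
  norm_num

theorem injective_of_card_fiber_le_one_of_sum_le (d : Fin 3 → Fin 3)
    (h0 : #{a | d a = 0} ≤ 1) (h1 : #{a | d a = 1} ≤ 1) (hsum : (d 0 : ℕ) + d 1 + d 2 ≤ 3) :
    d.Injective := by
  revert d; decide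

theorem mem_Ystar_βp_iff {q : Fin 3 → ℕ} (h0 : q 0 = 1) (h1 : q 1 = 1) (h2 : 1 ≤ q 2)
    {d : Fin 3 → Fin 3} : d ∈ Ystar q (fun _ => βp) ↔ d.Injective := by
  have hq : ∀ o, 1 ≤ q o := by
    intro o; fin_cases o <;> simp [h0, h1, h2]
  simp only [Ystar, Finset.mem_filter, Finset.mem_univ, true_and]
  constructor
  · rintro ⟨hok, hmin⟩
    have hRV := hmin _ (isAssignment_detMat (detOK_of_injective hq Function.injective_id))
    rw [RV_βp_detMat_of_injective Function.injective_id, RV_detMat] at hRV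
    simp only [Fin.sum_univ_three, rk_βp] at hRV
    push_cast at hRV
    have hsum : ((d 0 : ℕ) : ℝ) + (d 1 : ℕ) + (d 2 : ℕ) ≤ 3 := by linarith
    refine injective_of_card_fiber_le_one_of_sum_le d ?_ ?_ (by exact_mod_cast hsum)
    · convert hok 0; exact h0.symm
    · convert hok 1; exact h1.symm
  · intro hd
    exact ⟨detOK_of_injective hq hd, fun x hx =>
      (RV_βp_detMat_of_injective hd).trans_le (six_le_RV_βp h0 h1 hx)⟩

theorem fU_βp {q : Fin 3 → ℕ} (h0 : q 0 = 1) (h1 : q 1 = 1) (h2 : 1 ≤ q 2) (a o : Fin 3) :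
    fU q (fun _ => βp) a o = 1 / 3 := by
  have hY : Ystar q (fun _ => βp) = ({d | Function.Injective d} : Finset (Fin 3 → Fin 3)) := by
    ext d; simp [mem_Ystar_βp_iff h0 h1 h2]
  have hcard : #{d : Fin 3 → Fin 3 | Function.Injective d} = 6 := by decide
  have hfiber : #{d ∈ ({d | Function.Injective d} : Finset (Fin 3 → Fin 3)) | d a = o} = 2 := by
    revert a o; decide
  rw [fU_apply, hY, hcard, hfiber]
  norm_num

theorem refuse_of_eq_rp (r : Fin 3 → Pref (Fin 3)) (x : Fin 3 → Fin 3 → ℝ) {a : Fin 3}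
    (hr : r a = rp) : refuse 2 r x a = ![x a 0, 0, x a 1 + x a 2] := by
  have rk0 : rk rp 0 = 1 := rfl
  have rk1 : rk rp 1 = 3 := rfl
  have rk2 : rk rp 2 = 2 := rfl
  funext o
  fin_cases o <;> simp [refuse, hr, Finset.sum_filter, Fin.sum_univ_three, rk0, rk1, rk2]

/-- in the 3-agent example, when `a1` (true preference `r`) reveals the
ODS `β` and the others truthfully reveal `β`, the post-refusal assignment gives `a1`
`(1/3, 0, 2/3)` and the others `(1/3, 1/3, 1/3)`, and it is wasteful: `o2` is
undersubscribed while `a2` holds probability on `∅` and prefers `o2` to `∅`. -/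
theorem stmt16 (q : Fin 3 → ℕ) (h0 : q 0 = 1) (h1 : q 1 = 1) (h2 : 3 ≤ q 2) :
    (refuse 2 (fun i : Fin 3 => if i = 0 then rp else βp) (fU q (fun _ : Fin 3 => βp)) 0 0
        = 1 / 3 ∧
     refuse 2 (fun i : Fin 3 => if i = 0 then rp else βp) (fU q (fun _ : Fin 3 => βp)) 0 1
        = 0 ∧
     refuse 2 (fun i : Fin 3 => if i = 0 then rp else βp) (fU q (fun _ : Fin 3 => βp)) 0 2
        = 2 / 3) ∧
    (∀ a : Fin 3, a ≠ 0 → ∀ o : Fin 3,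
      refuse 2 (fun i : Fin 3 => if i = 0 then rp else βp) (fU q (fun _ : Fin 3 => βp)) a o
        = 1 / 3) ∧
    (∑ a : Fin 3,
      refuse 2 (fun i : Fin 3 => if i = 0 then rp else βp) (fU q (fun _ : Fin 3 => βp)) a 1
        = 2 / 3) ∧
    Wasteful q (fun i : Fin 3 => if i = 0 then rp else βp)
      (refuse 2 (fun i : Fin 3 => if i = 0 then rp else βp)
        (fU q (fun _ : Fin 3 => βp))) := by
  have hfU := fU_βp h0 h1 (by omega)
  have ha1 : refuse 2 (fun i : Fin 3 => if i = 0 then rp else βp) (fU q fun _ => βp) 0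
      = ![1 / 3, 0, 2 / 3] := by
    rw [refuse_of_eq_rp _ _ rfl, hfU, hfU, hfU]
    norm_num
  have hothers : ∀ a : Fin 3, a ≠ 0 → ∀ o : Fin 3,
      refuse 2 (fun i : Fin 3 => if i = 0 then rp else βp) (fU q fun _ => βp) a o = 1 / 3 :=
    fun a ha o => by
      rw [refuse_eq_of_rk_null_eq_card _ _ _ _ (by simp only [ha, if_false]; rfl), hfU]
  have hcol1 : ∑ a : Fin 3,
      refuse 2 (fun i : Fin 3 => if i = 0 then rp else βp) (fU q fun _ => βp) a 1 = 2 / 3 := by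
    rw [Fin.sum_univ_three, ha1, hothers 1 one_ne_zero, hothers 2 (by decide)]
    norm_num
  refine ⟨by simp [ha1], hothers, hcol1, 1, 2, 1, ?_, ?_, by decide⟩
  · rw [hcol1, h1]; norm_num
  · rw [hothers 1 one_ne_zero]; norm_num
end
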